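/- Let n ≥ 5, Z_n(x,y,z,a) be the 4-perturbed reciprocal matrix with x,y,z,a > 0, and w its Perron eigenvector. If y ≤ min{1,a,x} then w_1/w_{n-1} ≥ y, i.e., the edge (1,n-1) is in G_{Z_n(x,y,z,a),w}. -/
import Mathlib


/-- The reciprocal matrix `Z_n(x,y,z,a)`: all entries equal to one except
(in 1-based indexing) `(1,n-1) = y`, `(1,n) = x`, `(2,n-1) = a`, `(2,n) = z`
and the reciprocals at the transposed positions. -/
noncomputable def Zmat (n : ℕ) (x y z a : ℝ) : Matrix (Fin n) (Fin n) ℝ :=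
  fun i j =>
    if i.val = 0 ∧ j.val = n - 2 then y
    else if i.val = 0 ∧ j.val = n - 1 then x
    else if i.val = 1 ∧ j.val = n - 2 then a
    else if i.val = 1 ∧ j.val = n - 1 then z
    else if i.val = n - 2 ∧ j.val = 0 then y⁻¹
    else if i.val = n - 1 ∧ j.val = 0 then x⁻¹
    else if i.val = n - 2 ∧ j.val = 1 then a⁻¹
    else if i.val = n - 1 ∧ j.val = 1 then z⁻¹
    else 1

/-- if `y ≤ min {1, a, x}` then `w_1 / w_{n-1} ≥ y`, i.e. edge (1,n-1)
is in `G_{Z_n(x,y,z,a),w}`. -/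
theorem zmat_edge_one_nsub1 (n : ℕ) (hn : 5 ≤ n) (x y z a : ℝ)
    (hx : 0 < x) (hy : 0 < y) (hz : 0 < z) (ha : 0 < a)
    (r : ℝ) (w : Fin n → ℝ) (hw : ∀ i, 0 < w i)
    (heig : (Zmat n x y z a).mulVec w = r • w)
    (hy1 : y ≤ 1) (hya : y ≤ a) (hyx : y ≤ x) :
    y ≤ w ⟨0, by omega⟩ / w ⟨n - 2, by omega⟩ := by
  suffices main : ∀ (i0 i1 i2 i3 : Fin n), (i0:ℕ) = 0 → (i1:ℕ) = 1 →
      (i2:ℕ) = n - 2 → (i3:ℕ) = n - 1 → y ≤ w i0 / w i2 by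
    exact main ⟨0, by omega⟩ ⟨1, by omega⟩ ⟨n - 2, by omega⟩ ⟨n - 1, by omega⟩ rfl rfl rfl rfl
  intro i0 i1 i2 i3 h0v h1v h2v h3v
  -- entry formulas
  have hZ0 : ∀ j : Fin n, Zmat n x y z a i0 j
      = if (j : ℕ) = n - 2 then y else if (j : ℕ) = n - 1 then x else 1 := by
    intro j
    unfold Zmat
    simp only [h0v]
    by_cases h2 : (j : ℕ) = n - 2
    · rw [if_pos ⟨trivial, h2⟩, if_pos h2]
    · by_cases h3 : (j : ℕ) = n - 1
      · rw [if_neg (by tauto), if_pos ⟨trivial, h3⟩, if_neg h2, if_pos h3]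
      · rw [if_neg (by tauto), if_neg (by tauto), if_neg (by omega), if_neg (by omega),
          if_neg (by omega), if_neg (by omega), if_neg (by omega), if_neg (by omega),
          if_neg h2, if_neg h3]
  have hZ2 : ∀ j : Fin n, Zmat n x y z a i2 j
      = if (j : ℕ) = 0 then y⁻¹ else if (j : ℕ) = 1 then a⁻¹ else 1 := by
    intro j
    unfold Zmat
    simp only [h2v]
    by_cases h0 : (j : ℕ) = 0
    · rw [if_neg (by omega), if_neg (by omega), if_neg (by omega), if_neg (by omega),
        if_pos ⟨trivial, h0⟩, if_pos h0]
    · by_cases h1 : (j : ℕ) = 1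
      · rw [if_neg (by omega), if_neg (by omega), if_neg (by omega), if_neg (by omega),
          if_neg (by tauto), if_neg (by omega), if_pos ⟨trivial, h1⟩, if_neg h0, if_pos h1]
      · rw [if_neg (by omega), if_neg (by omega), if_neg (by omega), if_neg (by omega),
          if_neg (by tauto), if_neg (by omega), if_neg (by tauto), if_neg (by omega),
          if_neg h0, if_neg h1]
  -- ne facts
  have ne01 : i0 ≠ i1 := Fin.ne_of_val_ne (by omega)
  have ne02 : i0 ≠ i2 := Fin.ne_of_val_ne (by omega)
  have ne03 : i0 ≠ i3 := Fin.ne_of_val_ne (by omega)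
  have ne12 : i1 ≠ i2 := Fin.ne_of_val_ne (by omega)
  have ne13 : i1 ≠ i3 := Fin.ne_of_val_ne (by omega)
  have ne23 : i2 ≠ i3 := Fin.ne_of_val_ne (by omega)
  set S : ℝ := ∑ j, w j with hS
  have heq0 : ∑ j, Zmat n x y z a i0 j * w j = r * w i0 := by
    have h := congrFun heig i0
    simpa [Matrix.mulVec, dotProduct] using h
  have heq2 : ∑ j, Zmat n x y z a i2 j * w j = r * w i2 := by
    have h := congrFun heig i2
    simpa [Matrix.mulVec, dotProduct] using h
  -- r > 0
  have hr : 0 < r := by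
    have hpos : 0 < ∑ j, Zmat n x y z a i0 j * w j := by
      apply Finset.sum_pos
      · intro j _
        apply mul_pos _ (hw j)
        rw [hZ0 j]
        split_ifs
        · exact hy
        · exact hx
        · exact one_pos
      · exact ⟨i0, Finset.mem_univ i0⟩
    rw [heq0] at hpos
    nlinarith [hw i0]
  have E0 : r * w i0 = S + (y - 1) * w i2 + (x - 1) * w i3 := by
    rw [← heq0]
    have : ∑ j, Zmat n x y z a i0 j * w j
        = ∑ j, (w j + (if j = i2 then (y - 1) * w i2 else 0)
            + (if j = i3 then (x - 1) * w i3 else 0)) := by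
      apply Finset.sum_congr rfl
      intro j _
      rw [hZ0 j]
      by_cases h2 : (j : ℕ) = n - 2
      · have hj : j = i2 := Fin.ext (by omega)
        rw [if_pos h2, if_pos hj, if_neg (hj ▸ ne23)]
        rw [hj]; ring
      · by_cases h3 : (j : ℕ) = n - 1
        · have hj : j = i3 := Fin.ext (by omega)
          rw [if_neg h2, if_pos h3, if_pos hj,
            if_neg (fun h => h2 (by rw [h, h2v]))]
          rw [hj]; ring
        · rw [if_neg h2, if_neg h3,
            if_neg (fun h => h2 (by rw [h, h2v])),
            if_neg (fun h => h3 (by rw [h, h3v]))]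
          ring
    rw [this, Finset.sum_add_distrib, Finset.sum_add_distrib,
      Finset.sum_ite_eq' Finset.univ i2 (fun _ => (y - 1) * w i2),
      Finset.sum_ite_eq' Finset.univ i3 (fun _ => (x - 1) * w i3)]
    simp [hS]
  have E2 : r * w i2 = S + (y⁻¹ - 1) * w i0 + (a⁻¹ - 1) * w i1 := by
    rw [← heq2]
    have : ∑ j, Zmat n x y z a i2 j * w j
        = ∑ j, (w j + (if j = i0 then (y⁻¹ - 1) * w i0 else 0)
            + (if j = i1 then (a⁻¹ - 1) * w i1 else 0)) := by
      apply Finset.sum_congr rfl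
      intro j _
      rw [hZ2 j]
      by_cases h0 : (j : ℕ) = 0
      · have hj : j = i0 := Fin.ext (by omega)
        rw [if_pos h0, if_pos hj, if_neg (hj ▸ ne01)]
        rw [hj]; ring
      · by_cases h1 : (j : ℕ) = 1
        · have hj : j = i1 := Fin.ext (by omega)
          rw [if_neg h0, if_pos h1, if_pos hj,
            if_neg (fun h => h0 (by rw [h, h0v]))]
          rw [hj]; ring
        · rw [if_neg h0, if_neg h1,
            if_neg (fun h => h0 (by rw [h, h0v])),
            if_neg (fun h => h1 (by rw [h, h1v]))]
          ring
    rw [this, Finset.sum_add_distrib, Finset.sum_add_distrib,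
      Finset.sum_ite_eq' Finset.univ i0 (fun _ => (y⁻¹ - 1) * w i0),
      Finset.sum_ite_eq' Finset.univ i1 (fun _ => (a⁻¹ - 1) * w i1)]
    simp [hS]
  have hE : r * (w i0 - y * w i2)
      = (1 - y) * (S - w i0 - w i2) + (x - 1) * w i3 + (y - y / a) * w i1 := by
    have h : r * (w i0 - y * w i2) = r * w i0 - y * (r * w i2) := by ring
    rw [h, E0, E2]
    field_simp
    ring
  have hSge : w i0 + w i1 + w i2 + w i3 ≤ S := by
    have hsub : ({i0, i1, i2, i3} : Finset (Fin n)) ⊆ Finset.univ := Finset.subset_univ _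
    have h := Finset.sum_le_sum_of_subset_of_nonneg hsub (fun i _ _ => (hw i).le)
    rw [Finset.sum_insert (by simp [ne01, ne02, ne03]),
      Finset.sum_insert (by simp [ne12, ne13]),
      Finset.sum_pair ne23] at h
    linarith [h]
  have hA : 0 ≤ (x - y) * w i3 := mul_nonneg (by linarith) (hw i3).le
  have hB : 0 ≤ (1 - y / a) * w i1 := by
    apply mul_nonneg _ (hw i1).le
    have : y / a ≤ 1 := (div_le_one ha).mpr hya
    linarith
  have hC : (1 - y) * (w i1 + w i3) ≤ (1 - y) * (S - w i0 - w i2) :=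
    mul_le_mul_of_nonneg_left (by linarith) (by linarith)
  have hD : (1 - y) * (w i1 + w i3) + (x - 1) * w i3 + (y - y / a) * w i1
      = (x - y) * w i3 + (1 - y / a) * w i1 := by ring
  have hpos : 0 ≤ r * (w i0 - y * w i2) := by rw [hE]; linarith
  have hfin : 0 ≤ w i0 - y * w i2 := by
    by_contra hcon
    push_neg at hcon
    nlinarith
  rw [le_div_iff₀ (hw i2)]
  linarith
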